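/- arXiv:math/0512559 — 5 statements merged into one kernel-verified Lean document; each statement's English description precedes it below -/
import Mathlib

section
/- Let L_N = ℕ and let RI be the general logic-system whose unary relation is empty and which, for each n ≥ 2, contains the single n-tuple (a₁,…,aₙ) with a_i = n(n−1)/2 − 2 + i for 1 ≤ i ≤ n (so the tuples are the consecutive blocks (0,1), (2,3,4), (5,6,7,8), …). Let C be the finite consequence operator generated by RI. Then there is no finite logic-system RI₁ on L_N (a logic-system consisting of only finitely many n-ary relations) whose generated finite consequence operator C₁ satisfies C₁ = C. -/
/-!
A general logic-system `RI` on a language `L` is encoded as a set of nonempty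
lists over `L`: a list `[a₁, …, aₙ]` with `n ≥ 2` is an `n`-ary rule allowing the
deduction of `aₙ` once `a₁, …, a_{n-1}` have been obtained, and a singleton
`[a]` records that `a` is a member of a unary relation, i.e. an axiom.
(A collection of `n`-ary relations `Rⁿ ⊆ Lⁿ` is identified with the set of all
its tuples, encoded as lists.)
-/

/-- `bs = [b₁, …, b_m]` is an `RI`-deduction from `X`: each step `b_j` is in `X`,
or is an axiom (member of a unary relation of `RI`), or is the last coordinate
of a tuple `(a₁, …, aₙ) ∈ RI` whose first `n-1` coordinates all lie in `X`
together with the axioms and the previous steps `b₁, …, b_{j-1}`. -/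
def IsDeduction {L : Type*} (RI : Set (List L)) (X : Set L) (bs : List L) : Prop :=
  ∀ j : Fin bs.length,
    bs.get j ∈ X ∨ [bs.get j] ∈ RI ∨
      ∃ l : List L, l ≠ [] ∧ l ++ [bs.get j] ∈ RI ∧
        ∀ b ∈ l, b ∈ X ∨ [b] ∈ RI ∨ b ∈ bs.take j.1

/-- The operator generated by the logic-system `RI`: it sends `X ⊆ L` to the set
of all elements of `L` deducible from `X` by a finite-step `RI`-deduction. -/
def genOp {L : Type*} (RI : Set (List L)) (X : Set L) : Set L :=
  {a | ∃ bs : List L, IsDeduction RI X bs ∧ a ∈ bs}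

/-- The `n`-th block tuple `(a₁, …, aₙ)`, `aᵢ = n(n-1)/2 - 2 + i` for `1 ≤ i ≤ n`
(encoded with `j = i - 1`, so the entries are `n(n-1)/2 - 1 + j`, `0 ≤ j < n`):
the blocks are `(0,1), (2,3,4), (5,6,7,8), …` -/
def blockTuple (n : ℕ) : List ℕ :=
  List.ofFn (fun j : Fin n => n * (n - 1) / 2 - 1 + (j : ℕ))

/-- The general logic-system with empty unary relation whose `n`-ary relation
(`n ≥ 2`) consists of the single tuple `blockTuple n`. -/
def blockRI : Set (List ℕ) :=
  {l | ∃ n : ℕ, 2 ≤ n ∧ l = blockTuple n}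

/-- A logic-system consists of finitely many `n`-ary relations iff only finitely
many arities occur among its tuples (several relations of the same arity act,
for deduction, exactly as their union). -/
def FinitelyManyRelations {L : Type*} (RI : Set (List L)) : Prop :=
  Set.Finite {n : ℕ | ∃ l ∈ RI, l.length = n}

/-! ### Auxiliary definitions and lemmas -/

/-- Start of the `n`-th block. -/
def sb (n : ℕ) : ℕ := n * (n - 1) / 2 - 1

/-- The set of premises of the `n`-th block rule (all entries but the last). -/
def Pset (n : ℕ) : Set ℕ := {x | ∃ j, j < n - 1 ∧ x = sb n + j}

lemma blockTuple_length (n : ℕ) : (blockTuple n).length = n := by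
  simp [blockTuple]

lemma sb_spec {n : ℕ} (hn : 2 ≤ n) : 2 * sb n + 2 = n * (n - 1) := by
  obtain ⟨k, rfl⟩ : ∃ k, n = k + 2 := ⟨n - 2, by omega⟩
  have hd : 2 ∣ (k + 2) * (k + 2 - 1) := by
    have := Nat.even_mul_succ_self (k + 1)
    exact (Nat.mul_comm (k + 2) (k + 1)) ▸ this.two_dvd
  have h1 : 2 * ((k + 2) * (k + 2 - 1) / 2) = (k + 2) * (k + 2 - 1) :=
    Nat.mul_div_cancel' hd
  have h2 : 2 * 1 ≤ (k + 2) * (k + 2 - 1) := Nat.mul_le_mul (by omega) (by omega)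
  unfold sb
  omega

lemma sb_lt {m n : ℕ} (hm : 2 ≤ m) (hmn : m < n) : sb m + (m - 1) < sb n := by
  have h1 := sb_spec hm
  have h2 := sb_spec (show 2 ≤ n by omega)
  have h3 : (m + 1) * m ≤ n * (n - 1) := Nat.mul_le_mul (by omega) (by omega)
  obtain ⟨j, rfl⟩ : ∃ j, m = j + 2 := ⟨m - 2, by omega⟩
  have h4 : (j + 2 + 1) * (j + 2) = (j + 2) * (j + 2 - 1) + 2 * (j + 2) := by
    simp only [show j + 2 - 1 = j + 1 from rfl]
    ring
  omega

lemma Pset_sub {m n : ℕ} (hm : 2 ≤ m) (hn : 2 ≤ n) (h : Pset m ⊆ Pset n) : m = n := by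
  by_contra hne
  have hsm : sb m ∈ Pset m := ⟨0, by omega, by omega⟩
  obtain ⟨j, hj, hjeq⟩ := h hsm
  rcases Nat.lt_or_ge m n with h1 | h1
  · have := sb_lt hm h1
    omega
  · have h2 : n < m := by omega
    have h3 := sb_lt hn h2
    omega

lemma rule_decomp {l : List ℕ} {b : ℕ} {m : ℕ} (hm : 2 ≤ m)
    (h : l ++ [b] = blockTuple m) :
    (∀ x ∈ l, x ∈ Pset m) ∧ (∀ j, j < m - 1 → sb m + j ∈ l) := by
  have hlen : l.length + 1 = m := by
    have := congrArg List.length h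
    simpa [blockTuple_length] using this
  constructor
  · intro x hx
    obtain ⟨i, hi, rfl⟩ := List.mem_iff_getElem.mp hx
    refine ⟨i, by omega, ?_⟩
    have h1 : (l ++ [b])[i]'(by simp; omega) = l[i] := by
      rw [List.getElem_append_left hi]
    have h2 := List.getElem_of_eq h (show i < (l ++ [b]).length by simp; omega)
    simp only [blockTuple, List.getElem_ofFn, sb] at h2 ⊢
    omega
  · intro j hj
    have hjl : j < l.length := by omega
    have h1 : (l ++ [b])[j]'(by simp; omega) = l[j] := by
      rw [List.getElem_append_left hjl]
    have h2 := List.getElem_of_eq h (show j < (l ++ [b]).length by simp; omega)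
    simp only [blockTuple, List.getElem_ofFn] at h2
    rw [h1] at h2
    exact h2 ▸ List.getElem_mem hjl

lemma singleton_not_blockRI (a : ℕ) : [a] ∉ blockRI := by
  rintro ⟨m, hm, hme⟩
  have := congrArg List.length hme
  simp [blockTuple_length] at this
  omega

lemma blockTuple_decomp (k : ℕ) :
    blockTuple (k + 2) =
      (List.ofFn (fun j : Fin (k + 1) => sb (k + 2) + (j : ℕ))) ++ [sb (k + 2) + (k + 1)] := by
  rw [blockTuple, List.ofFn_succ']
  simp [List.concat_eq_append, sb]

lemma last_mem_genOp (k : ℕ) :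
    sb (k + 2) + (k + 1) ∈ genOp blockRI (Pset (k + 2)) := by
  refine ⟨[sb (k + 2) + (k + 1)], ?_, by simp⟩
  intro j
  have hj : ([sb (k + 2) + (k + 1)] : List ℕ).get j = sb (k + 2) + (k + 1) := by
    fin_cases j <;> rfl
  rw [hj]
  right; right
  refine ⟨List.ofFn (fun j : Fin (k + 1) => sb (k + 2) + (j : ℕ)), by simp, ?_, ?_⟩
  · exact ⟨k + 2, by omega, (blockTuple_decomp k).symm⟩
  · intro b hb
    left
    obtain ⟨i, hi⟩ := List.mem_ofFn.mp hb
    exact ⟨(i : ℕ), by omega, hi.symm⟩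

/-- Key closure fact: if `Y` is a proper subset of `Pset n`, then the block
operator adds nothing to `Y`. -/
lemma closure_proper {n : ℕ} (hn : 2 ≤ n) {Y : Set ℕ} (hY : Y ⊆ Pset n)
    {x : ℕ} (hx : x ∈ Pset n) (hxY : x ∉ Y) : genOp blockRI Y ⊆ Y := by
  rintro a ⟨bs, hded, ha⟩
  obtain ⟨i, hi, rfl⟩ := List.mem_iff_getElem.mp ha
  suffices H : ∀ k, ∀ hk : k < bs.length, bs[k] ∈ Y from H i hi
  intro k
  induction k using Nat.strong_induction_on with
  | _ k IH =>
    intro hk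
    rcases hded ⟨k, hk⟩ with h | h | ⟨l, hl0, hlRI, hlmem⟩
    · exact h
    · exact absurd h (singleton_not_blockRI _)
    · obtain ⟨m, hm, hme⟩ := hlRI
      have hd := rule_decomp hm hme
      have hlY : ∀ b ∈ l, b ∈ Y := by
        intro b hb
        rcases hlmem b hb with h | h | h
        · exact h
        · exact absurd h (singleton_not_blockRI _)
        · obtain ⟨i', hi', hbi⟩ := List.mem_iff_getElem.mp h
          have hik : i' < k := by simp at hi'; omega
          have hib : i' < bs.length := by simp at hi'; omega
          have ht : (bs.take k)[i'] = bs[i'] := by rw [List.getElem_take]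
          rw [ht] at hbi
          exact hbi ▸ IH i' hik hib
      have hPm : Pset m ⊆ Y := by
        rintro y ⟨j, hj, rfl⟩
        exact hlY _ (hd.2 j hj)
      have hmn : m = n := Pset_sub hm hn (hPm.trans hY)
      subst hmn
      exact absurd (hPm hx) hxY

/-- No finite logic-system on `ℕ` generates the same consequence operator as the
infinite block logic-system. -/
theorem stmt3 :
    ¬ ∃ RI₁ : Set (List ℕ), FinitelyManyRelations RI₁ ∧
        ∀ X : Set ℕ, genOp RI₁ X = genOp blockRI X := by
  classical
  rintro ⟨RI₁, hfin, heq⟩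
  obtain ⟨N, hN⟩ := hfin.bddAbove
  have hlen : ∀ l ∈ RI₁, l.length ≤ N := fun l hl => hN ⟨l, hl, rfl⟩
  set n := N + 2 with hndef
  have hn2 : 2 ≤ n := by omega
  -- the empty set is closed
  have hemp : genOp blockRI (∅ : Set ℕ) ⊆ ∅ :=
    closure_proper (n := 2) le_rfl (by simp)
      (x := 0) ⟨0, by omega, by simp [sb]⟩ (by simp)
  -- RI₁ has no axioms
  have hax : ∀ a : ℕ, [a] ∈ RI₁ → False := by
    intro a ha
    have hmem : a ∈ genOp RI₁ (∅ : Set ℕ) := by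
      refine ⟨[a], ?_, by simp⟩
      intro j
      have hj : ([a] : List ℕ).get j = a := by fin_cases j <;> rfl
      rw [hj]
      exact Or.inr (Or.inl ha)
    rw [heq] at hmem
    exact hemp hmem
  -- the last element of block n is derivable from Pset n in RI₁
  have he : sb n + (n - 1) ∈ genOp RI₁ (Pset n) := by
    rw [heq]
    have := last_mem_genOp N
    simpa [hndef] using this
  obtain ⟨bs, hded, hmem⟩ := he
  have heP : sb n + (n - 1) ∉ Pset n := by
    rintro ⟨j, hj, hje⟩
    omega
  have hex : ∃ k, ∃ hk : k < bs.length, bs[k] ∉ Pset n := by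
    obtain ⟨i, hi, hbi⟩ := List.mem_iff_getElem.mp hmem
    exact ⟨i, hi, by rw [hbi]; exact heP⟩
  obtain ⟨hk, hbk⟩ := Nat.find_spec hex
  set k := Nat.find hex with hkdef
  have hmin : ∀ i, i < k → ∀ hi : i < bs.length, bs[i] ∈ Pset n := by
    intro i hik hi
    by_contra hcon
    exact Nat.find_min hex hik ⟨hi, hcon⟩
  rcases hded ⟨k, hk⟩ with h | h | ⟨l, hl0, hlRI, hlmem⟩
  · exact hbk h
  · exact hax _ h
  · -- all premises of the applied rule lie in Pset n
    have hlP : ∀ b ∈ l, b ∈ Pset n := by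
      intro b hb
      rcases hlmem b hb with h | h | h
      · exact h
      · exact absurd h (fun hh => hax _ hh)
      · obtain ⟨i', hi', hbi⟩ := List.mem_iff_getElem.mp h
        have hik : i' < k := by simp at hi'; omega
        have hib : i' < bs.length := by simp at hi'; omega
        have ht : (bs.take k)[i'] = bs[i'] := by rw [List.getElem_take]
        rw [ht] at hbi
        exact hbi ▸ hmin i' hik hib
    set Y : Set ℕ := {b | b ∈ l} with hYdef
    have hYP : Y ⊆ Pset n := fun b hb => hlP b hb
    have hlsmall : l.length + 1 ≤ N := by
      have := hlen _ hlRI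
      simpa using this
    -- Y is a *proper* subset of Pset n
    have hproper : ∃ x ∈ Pset n, x ∉ Y := by
      by_contra hcon
      push_neg at hcon
      have hsub : Finset.image (fun j => sb n + j) (Finset.range (n - 1)) ⊆ l.toFinset := by
        intro x hx
        simp only [Finset.mem_image, Finset.mem_range] at hx
        obtain ⟨j, hj, rfl⟩ := hx
        simpa [hYdef] using hcon _ ⟨j, hj, rfl⟩
      have hcard := Finset.card_le_card hsub
      rw [Finset.card_image_of_injective _ (fun a b hab => by omega)] at hcard
      have htf := l.toFinset_card_le
      simp [Finset.card_range] at hcard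
      omega
    obtain ⟨x, hxP, hxY⟩ := hproper
    -- bs[k] is derivable from Y alone
    have hbY : bs[k] ∈ genOp RI₁ Y := by
      refine ⟨[bs[k]], ?_, by simp⟩
      intro j
      have hj : ([bs[k]] : List ℕ).get j = bs[k] := by fin_cases j <;> rfl
      rw [hj]
      right; right
      exact ⟨l, hl0, hlRI, fun b hb => Or.inl hb⟩
    rw [heq] at hbY
    have hfin : bs[k] ∈ Y := closure_proper hn2 hYP hxP hxY hbY
    exact hbk (hlP _ hfin)
end

section
/- Let L_N = ℕ. There exist infinitely many pairwise distinct finite consequence operators on L_N, none of which is generated by any finite logic-system. Explicitly, for each m ∈ ℕ let RI_m be the general logic-system with empty unary relation and, for each n ≥ 2, the single n-tuple (a₁,…,aₙ) with a_i = m + n(n−1)/2 − 2 + i for 1 ≤ i ≤ n; then the finite consequence operators C_m generated by the RI_m are pairwise distinct and no C_m equals the consequence operator generated by any finite logic-system on L_N. -/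
/-- The `n`-th block tuple shifted by `m`: `(a₁, …, aₙ)` with
`aᵢ = m + n(n-1)/2 - 2 + i` for `1 ≤ i ≤ n` (encoded with `j = i - 1`). -/
def blockTupleShift (m n : ℕ) : List ℕ :=
  List.ofFn (fun j : Fin n => m + n * (n - 1) / 2 - 1 + (j : ℕ))

/-- For each `m`, the general logic-system with empty unary relation whose
`n`-ary relation (`n ≥ 2`) is the single tuple `blockTupleShift m n`. -/
def blockRIShift (m : ℕ) : Set (List ℕ) :=
  {l | ∃ n : ℕ, 2 ≤ n ∧ l = blockTupleShift m n}

namespace Stmt4Aux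

def T (n : ℕ) : ℕ := n * (n - 1) / 2

lemma T_succ (n : ℕ) : T (n + 1) = T n + n := by
  unfold T
  simp only [Nat.add_sub_cancel]
  cases n with
  | zero => rfl
  | succ k =>
    have h1 : (k + 1 + 1) * (k + 1) = (k + 1) * (k + 1 - 1) + 2 * (k + 1) := by
      simp only [Nat.add_sub_cancel]; ring
    rw [h1, Nat.add_mul_div_left _ _ (by norm_num : (0:ℕ) < 2)]

lemma T_mono : Monotone T := monotone_nat_of_le_succ fun n => by rw [T_succ]; omega

lemma T_two : T 2 = 1 := rfl

lemma one_le_T {n : ℕ} (h : 2 ≤ n) : 1 ≤ T n := T_two ▸ T_mono h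

lemma T_add_le {a b : ℕ} (h : a < b) : T a + a ≤ T b := by
  have h1 := T_mono (Nat.succ_le_of_lt h)
  rw [T_succ] at h1
  exact h1

lemma block_eq {n n' j : ℕ} (hn : 2 ≤ n) (hn' : 2 ≤ n') (hj : j ≤ n - 1)
    (h : T n' = T n + j) : n' = n := by
  rcases lt_trichotomy n' n with hlt | heq | hgt
  · have := T_add_le hlt; omega
  · exact heq
  · have := T_add_le hgt; omega

lemma bts_eq (m n : ℕ) :
    blockTupleShift m n = List.ofFn (fun j : Fin n => m + T n - 1 + (j : ℕ)) := rfl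

lemma no_axiom_block {m b : ℕ} (h : [b] ∈ blockRIShift m) : False := by
  obtain ⟨n, hn, heq⟩ := h
  have := congrArg List.length heq
  simp [blockTupleShift] at this
  omega

lemma rule_inv {m : ℕ} {l : List ℕ} {b : ℕ} (h : l ++ [b] ∈ blockRIShift m) :
    ∃ n, 2 ≤ n ∧ l.length + 1 = n ∧ b = m + T n - 1 + (n - 1) ∧
      (∀ j, j < n - 1 → (m + T n - 1 + j) ∈ l) ∧
      (∀ p ∈ l, ∃ j, j < n - 1 ∧ p = m + T n - 1 + j) := by
  obtain ⟨n, hn, heq⟩ := h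
  rw [bts_eq] at heq
  have hlen : l.length + 1 = n := by
    have := congrArg List.length heq
    simpa using this
  refine ⟨n, hn, hlen, ?_, ?_, ?_⟩
  · have h1 : (l ++ [b])[l.length]'(by simp) = b := by simp
    have h2 := List.getElem_of_eq heq (show l.length < (l ++ [b]).length by simp)
    simp only [List.getElem_ofFn] at h2
    omega
  · intro j hj
    have hjl : j < l.length := by omega
    have h1 : (l ++ [b])[j]'(by simp; omega) = l[j] := List.getElem_append_left hjl
    have h2 := List.getElem_of_eq heq (show j < (l ++ [b]).length by simp; omega)
    simp only [List.getElem_ofFn] at h2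
    rw [h1] at h2
    rw [← h2]
    exact List.getElem_mem _
  · intro p hp
    obtain ⟨i, hi, hpi⟩ := List.getElem_of_mem hp
    have h1 : (l ++ [b])[i]'(by simp; omega) = l[i] := List.getElem_append_left hi
    have h2 := List.getElem_of_eq heq (show i < (l ++ [b]).length by simp; omega)
    simp only [List.getElem_ofFn] at h2
    rw [h1] at h2
    exact ⟨i, by omega, by omega⟩

lemma ded_strong {L : Type*} {RI : Set (List L)} {X : Set L} {bs : List L}
    (h : IsDeduction RI X bs) (P : L → Prop)
    (hX : ∀ a ∈ X, P a)
    (hax : ∀ b, [b] ∈ RI → P b)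
    (hrule : ∀ l b, l ≠ [] → l ++ [b] ∈ RI → (∀ p ∈ l, P p) → P b) :
    ∀ a ∈ bs, P a := by
  have key : ∀ k, ∀ j : Fin bs.length, (j : ℕ) < k → P (bs.get j) := by
    intro k
    induction k with
    | zero => intro j hj; omega
    | succ k ih =>
      intro j hj
      rcases h j with hx | hax' | ⟨l, hl, hmem, hprem⟩
      · exact hX _ hx
      · exact hax _ hax'
      · refine hrule l _ hl hmem ?_
        intro p hp
        rcases hprem p hp with h1 | h2 | h3
        · exact hX _ h1
        · exact hax _ h2
        · obtain ⟨i, hi, hpi⟩ := List.getElem_of_mem h3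
          have hij : i < (j : ℕ) := lt_of_lt_of_le hi (by simp)
          have hib : i < bs.length := by omega
          have hget : (bs.take (j:ℕ))[i] = bs[i] := List.getElem_take
          have := ih ⟨i, hib⟩ (by simp; omega)
          rw [List.get_eq_getElem] at this
          rw [← hpi, hget]
          exact this
  intro a ha
  obtain ⟨j, hj⟩ := List.mem_iff_get.mp ha
  exact hj ▸ key bs.length j j.isLt

lemma isDeduction_take {L : Type*} {RI : Set (List L)} {X : Set L} {bs : List L}
    (h : IsDeduction RI X bs) (k : ℕ) : IsDeduction RI X (bs.take k) := by
  intro j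
  have hj : (j : ℕ) < bs.length := by
    have := j.isLt
    simp at this
    omega
  have hget : (bs.take k).get j = bs.get ⟨j, hj⟩ := by
    simp [List.get_eq_getElem, List.getElem_take]
  have htt : (bs.take k).take (j : ℕ) = bs.take (j : ℕ) := by
    rw [List.take_take]
    congr 1
    have := j.isLt
    simp at this
    omega
  rw [hget, htt]
  exact h ⟨j, hj⟩

lemma gen_mem_concl (m n : ℕ) (hn : 2 ≤ n) (X : Set ℕ)
    (hX : ∀ j, j < n - 1 → (m + T n - 1 + j) ∈ X) :
    (m + T n - 1 + (n - 1)) ∈ genOp (blockRIShift m) X := by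
  obtain ⟨k, rfl⟩ : ∃ k, n = k + 1 := ⟨n - 1, by omega⟩
  have hsplit : blockTupleShift m (k + 1) =
      (List.ofFn (fun i : Fin k => m + T (k+1) - 1 + (i : ℕ))) ++ [m + T (k+1) - 1 + k] := by
    rw [bts_eq, List.ofFn_succ']
    simp [List.concat_eq_append, Fin.last]
  refine ⟨blockTupleShift m (k+1), ?_, ?_⟩
  · intro j
    have hjlt : (j : ℕ) < k + 1 := by
      have := j.isLt; simpa [blockTupleShift] using this
    have hget : (blockTupleShift m (k+1)).get j = m + T (k+1) - 1 + (j : ℕ) := by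
      have h := List.get_ofFn (fun i : Fin (k+1) => m + T (k+1) - 1 + (i : ℕ)) j
      exact h
    by_cases hcase : (j : ℕ) < k
    · left
      rw [hget]
      exact hX _ (by omega)
    · right; right
      have hje : (j : ℕ) = k := by omega
      refine ⟨List.ofFn (fun i : Fin k => m + T (k+1) - 1 + (i : ℕ)), ?_, ?_, ?_⟩
      · have : (List.ofFn (fun i : Fin k => m + T (k+1) - 1 + (i : ℕ))).length = k := by simp
        intro hcon
        rw [hcon] at this
        simp at this
        omega
      · rw [hget, hje]
        exact ⟨k + 1, hn, hsplit.symm⟩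
      · intro b hb
        rw [List.mem_ofFn] at hb
        obtain ⟨i, hi⟩ := hb
        left
        rw [← hi]
        exact hX _ (by have := i.isLt; omega)
  · rw [hsplit]
    have : m + T (k+1) - 1 + (k + 1 - 1) = m + T (k+1) - 1 + k := by omega
    rw [this]
    simp

lemma genOp_block_empty (m : ℕ) : genOp (blockRIShift m) (∅ : Set ℕ) = ∅ := by
  ext a
  simp only [Set.mem_empty_iff_false, iff_false]
  rintro ⟨bs, hded, hmem⟩
  have key : ∀ a ∈ bs, False := by
    refine ded_strong hded (fun _ => False) (by simp) (fun b hb => no_axiom_block hb) ?_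
    intro l b hl hRI hprem
    obtain ⟨n, hn, hlen, hb, hjin, _⟩ := rule_inv hRI
    exact hprem _ (hjin 0 (by omega))
  exact key a hmem

lemma block_subset (m n : ℕ) (hn : 2 ≤ n) :
    genOp (blockRIShift m) {x | ∃ j, j < n - 1 ∧ x = m + T n - 1 + j} ⊆
      {x | ∃ j, j < n - 1 ∧ x = m + T n - 1 + j} ∪ {m + T n - 1 + (n - 1)} := by
  rintro a ⟨bs, hded, hmem⟩
  refine ded_strong hded
    (fun x => x ∈ {x | ∃ j, j < n - 1 ∧ x = m + T n - 1 + j} ∪ {m + T n - 1 + (n - 1)})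
    (fun a ha => Or.inl ha) (fun b hb => (no_axiom_block hb).elim) ?_ a hmem
  intro l b hl hRI hprem
  obtain ⟨n', hn', hlen, hb, hjin, _⟩ := rule_inv hRI
  have hTn := one_le_T hn
  have hTn' := one_le_T hn'
  have h0 := hprem _ (hjin 0 (by omega))
  have hne : n' = n := by
    rcases h0 with ⟨j, hj, hje⟩ | hc
    · exact block_eq (j := j) hn hn' (by omega) (by omega)
    · have hce : m + T n' - 1 + 0 = m + T n - 1 + (n - 1) := hc
      exact block_eq (j := n - 1) hn hn' (le_refl _) (by omega)
  subst hne
  exact Or.inr hb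

lemma block_not_mem (m n x₀ j₀ : ℕ) (hn : 2 ≤ n) (hj₀ : j₀ < n - 1)
    (hx₀ : x₀ = m + T n - 1 + j₀) :
    (m + T n - 1 + (n - 1)) ∉ genOp (blockRIShift m)
      {x | (∃ j, j < n - 1 ∧ x = m + T n - 1 + j) ∧ x ≠ x₀} := by
  rintro ⟨bs, hded, hmem⟩
  have key := ded_strong hded (fun x => (∃ j, j < n - 1 ∧ x = m + T n - 1 + j) ∧ x ≠ x₀)
    (fun a ha => ha) (fun b hb => (no_axiom_block hb).elim) ?_ _ hmem
  · obtain ⟨⟨j, hj, hje⟩, _⟩ := key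
    omega
  · intro l b hl hRI hprem
    obtain ⟨n', hn', hlen, hb, hjin, _⟩ := rule_inv hRI
    have hTn := one_le_T hn
    have hTn' := one_le_T hn'
    have h0 := hprem _ (hjin 0 (by omega))
    obtain ⟨⟨j, hj, hje⟩, _⟩ := h0
    have hne : n' = n := block_eq (j := j) hn hn' (by omega) (by omega)
    subst hne
    have hx := hprem _ (hjin j₀ hj₀)
    exact (hx.2 hx₀.symm).elim

lemma singleton_ded {m m' : ℕ} (hne : m' ≠ m) :
    genOp (blockRIShift m') {m} ⊆ {m} := by
  rintro a ⟨bs, hded, hmem⟩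
  refine ded_strong hded (fun x => x ∈ ({m} : Set ℕ))
    (fun a ha => ha) (fun b hb => (no_axiom_block hb).elim) ?_ a hmem
  intro l b hl hRI hprem
  obtain ⟨n, hn, hlen, hb, hjin, _⟩ := rule_inv hRI
  have hT2 : T 2 = 1 := rfl
  have h0 : m' + T n - 1 + 0 = m := hprem _ (hjin 0 (by omega))
  by_cases h3 : 3 ≤ n
  · have h1 : m' + T n - 1 + 1 = m := hprem _ (hjin 1 (by omega))
    exact absurd rfl (by omega : ¬ (m:ℕ) = m)
  · have hn2 : n = 2 := by omega
    subst hn2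
    have hTn := one_le_T (le_refl 2)
    exact absurd rfl (by omega : ¬ (m:ℕ) = m)

end Stmt4Aux



open Stmt4Aux

/-- There are infinitely many finite consequence operators on `ℕ` not generated
by any finite logic-system: the operators `C_m` generated by the shifted block
logic-systems are pairwise distinct, and none is generated by a finite
logic-system. -/
theorem stmt4 :
    (∀ m m' : ℕ, m ≠ m' → genOp (blockRIShift m) ≠ genOp (blockRIShift m')) ∧
    (∀ m : ℕ, ¬ ∃ RI₁ : Set (List ℕ), FinitelyManyRelations RI₁ ∧
        ∀ X : Set ℕ, genOp RI₁ X = genOp (blockRIShift m) X) := by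
  constructor
  · -- pairwise distinct
    intro m m' hmm h
    have h1 : m + 1 ∈ genOp (blockRIShift m) {m} := by
      have := gen_mem_concl m 2 (le_refl 2) {m} (fun j hj => by
        have hj0 : j = 0 := by omega
        subst hj0
        have : m + T 2 - 1 + 0 = m := by have := T_two; omega
        rw [this]
        rfl)
      have he : m + T 2 - 1 + (2 - 1) = m + 1 := by have := T_two; omega
      rwa [he] at this
    rw [h] at h1
    have h2 := singleton_ded (Ne.symm hmm) h1
    simp at h2
  · -- not generated by a finite logic-system
    rintro m ⟨RI₁, hfin, hall⟩
    -- RI₁ has no axioms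
    have hnoax : ∀ b, [b] ∈ RI₁ → False := by
      intro b hb
      have hded : IsDeduction RI₁ (∅ : Set ℕ) [b] := by
        intro j
        have hlen1 : [b].length = 1 := rfl
        have hj0 : (j : ℕ) = 0 := by have := j.isLt; omega
        right; left
        have hj' : j = ⟨0, by simp⟩ := Fin.ext hj0
        have hbg : [b].get j = b := by rw [hj']; rfl
        rw [hbg]
        exact hb
      have hmem : b ∈ genOp RI₁ (∅ : Set ℕ) := ⟨[b], hded, by simp⟩
      rw [hall, genOp_block_empty] at hmem
      exact hmem
    -- bound on arities
    obtain ⟨N, hN⟩ : ∃ N, ∀ l ∈ RI₁, l.length ≤ N := by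
      obtain ⟨N, hN⟩ := hfin.bddAbove
      exact ⟨N, fun l hl => hN ⟨l, hl, rfl⟩⟩
    set n := N + 2 with hn_def
    have hn : 2 ≤ n := by omega
    have hTn := one_le_T hn
    -- c is deducible from X
    have hcX : (m + T n - 1 + (n - 1)) ∈
        genOp RI₁ {x | ∃ j, j < n - 1 ∧ x = m + T n - 1 + j} := by
      rw [hall]
      exact gen_mem_concl m n hn _ (fun j hj => ⟨j, hj, rfl⟩)
    obtain ⟨bs, hded, hcbs⟩ := hcX
    set c := m + T n - 1 + (n - 1) with hc_def
    -- first occurrence of c in bs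
    have hex : ∃ k, c ∈ bs.take (k + 1) :=
      ⟨bs.length, by rw [List.take_of_length_le (by omega)]; exact hcbs⟩
    set i := Nat.find hex with hi_def
    have hi1 : c ∈ bs.take (i + 1) := Nat.find_spec hex
    have hnotake : c ∉ bs.take i := by
      rcases Nat.eq_zero_or_pos i with h0 | h0
      · rw [h0]; simp
      · have hmin := Nat.find_min hex (show i - 1 < i by omega)
        rw [show i - 1 + 1 = i by omega] at hmin
        exact hmin
    have hilen : i < bs.length := by
      by_contra hle
      push_neg at hle
      rw [List.take_of_length_le (by omega)] at hi1
      rw [List.take_of_length_le (by omega)] at hnotake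
      exact hnotake hi1
    have hgi : bs[i] = c := by
      rw [List.take_succ, List.getElem?_eq_getElem hilen] at hi1
      rcases List.mem_append.mp hi1 with h | h
      · exact absurd h hnotake
      · rw [Option.toList_some, List.mem_singleton] at h
        exact h.symm
    -- apply the deduction condition at step i
    have hstep := hded ⟨i, hilen⟩
    rw [show bs.get ⟨i, hilen⟩ = c from hgi] at hstep
    have htake : bs.take ((⟨i, hilen⟩ : Fin bs.length) : ℕ) = bs.take i := rfl
    rcases hstep with hcX' | hax | ⟨l, hlne, hlRI, hprem⟩
    · simp only [Set.mem_setOf_eq] at hcX'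
      obtain ⟨j, hj, hje⟩ := hcX'
      rw [hc_def] at hje
      omega
    · exact hnoax _ hax
    · -- the premises of the rule deducing c all lie in X
      have hlX : ∀ b ∈ l, b ∈ {x | ∃ j, j < n - 1 ∧ x = m + T n - 1 + j} := by
        intro b hb
        rcases hprem b hb with h | h | h
        · exact h
        · exact (hnoax _ h).elim
        · rw [htake] at h
          have hbded : b ∈ genOp RI₁ {x | ∃ j, j < n - 1 ∧ x = m + T n - 1 + j} :=
            ⟨bs.take i, isDeduction_take hded i, h⟩
          rw [hall] at hbded
          rcases block_subset m n hn hbded with hx | hcc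
          · exact hx
          · have hbc : b = c := hcc
            rw [hbc] at h
            exact (hnotake h).elim
      -- the rule is short, so it misses some element x₀ of X
      have hllen : l.length + 1 ≤ N := by
        have := hN _ hlRI
        simpa using this
      obtain ⟨x₀, hx₀S, hx₀l⟩ :
          ∃ x₀ ∈ (Finset.range (n - 1)).image (fun j => m + T n - 1 + j), x₀ ∉ l := by
        by_contra hcon
        push_neg at hcon
        have hsub : (Finset.range (n - 1)).image (fun j => m + T n - 1 + j) ⊆ l.toFinset :=
          fun y hy => List.mem_toFinset.mpr (hcon y hy)
        have hcard := Finset.card_le_card hsub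
        rw [Finset.card_image_of_injective _ (add_right_injective _), Finset.card_range] at hcard
        have h2 : l.toFinset.card ≤ l.length := l.toFinset_card_le
        omega
      obtain ⟨j₀, hj₀r, hx₀⟩ := Finset.mem_image.mp hx₀S
      rw [Finset.mem_range] at hj₀r
      -- c is deducible from Y = X \ {x₀} via RI₁
      have hlY : ∀ b ∈ l,
          b ∈ {x | (∃ j, j < n - 1 ∧ x = m + T n - 1 + j) ∧ x ≠ x₀} := by
        intro b hb
        refine ⟨hlX b hb, ?_⟩
        rintro rfl
        exact hx₀l hb
      have hdedY : IsDeduction RI₁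
          {x | (∃ j, j < n - 1 ∧ x = m + T n - 1 + j) ∧ x ≠ x₀} (l ++ [c]) := by
        intro j
        have hjlt : (j : ℕ) < l.length + 1 := by
          have := j.isLt; simpa using this
        by_cases hjl : (j : ℕ) < l.length
        · left
          have hget : (l ++ [c]).get j = l[(j : ℕ)] := by
            rw [List.get_eq_getElem]
            exact List.getElem_append_left hjl
          rw [hget]
          exact hlY _ (List.getElem_mem _)
        · have hje : (j : ℕ) = l.length := by omega
          have hget : (l ++ [c]).get j = c := by
            rw [List.get_eq_getElem]
            simp only [hje, List.getElem_concat_length]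
          rw [hget]
          right; right
          exact ⟨l, hlne, hlRI, fun b hb => Or.inl (hlY b hb)⟩
      have hcY : c ∈ genOp RI₁
          {x | (∃ j, j < n - 1 ∧ x = m + T n - 1 + j) ∧ x ≠ x₀} :=
        ⟨l ++ [c], hdedY, by simp⟩
      rw [hall] at hcY
      exact block_not_mem m n x₀ j₀ hn hj₀r hx₀.symm hcY
end

section
/- Let L be a nonempty set and let C be a finite consequence operator on L. Define the general logic-system RI* from C as follows: the unary relation is R¹ = C(∅); for each nonempty finite X ⊆ L with |X| = n and each enumeration X = {x₁,…,xₙ}, let R^{n+1}_X(C) = {(x₁,…,xₙ,y) : y ∈ C(X) − (X ∪ R¹)} if C(X) ≠ X ∪ R¹ and ∅ otherwise; let R^{n+1}_F(C) = ⋃{R^{n+1}_X(C) : X ∈ F(L), |X| = n}; and let RI* = {R¹} ∪ {R^{n+1}_F(C) : n ≥ 1}. If C* is the finite consequence operator generated by RI*, then C* = C, i.e., C*(X) = C(X) for every X ⊆ L. -/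
/-- The logic-system `RI*` defined from an operator `C`: its unary relation is
`R¹ = C(∅)`, and for each nonempty finite `X ⊆ L` with `|X| = n` and each
enumeration `X = {x₁, …, xₙ}` (a nodup list `xs`), it contains the
`(n+1)`-tuples `(x₁, …, xₙ, y)` for `y ∈ C(X) − (X ∪ R¹)` (so when
`C(X) = X ∪ R¹` no tuple arises from `X`, i.e. the relation is `∅` there). -/
def RIstar {L : Type*} (C : Set L → Set L) : Set (List L) :=
  {l | ∃ a ∈ C ∅, l = [a]} ∪
    {l | ∃ (xs : List L) (y : L), xs ≠ [] ∧ xs.Nodup ∧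
      y ∈ C {x | x ∈ xs} \ ({x | x ∈ xs} ∪ C ∅) ∧ l = xs ++ [y]}

/-- If `C` is a finite consequence operator on `L` and `C*` is the operator
generated by the logic-system `RI*` defined from `C`, then `C* = C`. -/
theorem stmt5 {L : Type*} [Nonempty L] (C : Set L → Set L)
    (h_incl : ∀ X : Set L, X ⊆ C X)
    (h_idem : ∀ X : Set L, C (C X) = C X)
    (h_mono : ∀ X Y : Set L, X ⊆ Y → C X ⊆ C Y)
    (h_fin : ∀ X : Set L, C X = ⋃ A ∈ {A : Set L | A ⊆ X ∧ A.Finite}, C A) :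
    ∀ X : Set L, genOp (RIstar C) X = C X := by
  intro X
  have hax : ∀ a : L, [a] ∈ RIstar C → a ∈ C X := by
    intro a ha
    rcases ha with ⟨b, hb, heq⟩ | ⟨xs, y, hne, _, _, heq⟩
    · cases heq; exact h_mono ∅ X (by simp) hb
    · exfalso
      have hlen : ([a] : List L).length = (xs ++ [y]).length := by rw [heq]
      simp only [List.length_singleton, List.length_append] at hlen
      exact hne (List.length_eq_zero_iff.mp (by omega))
  apply Set.Subset.antisymm
  · -- genOp ⊆ C X
    rintro a ⟨bs, hded, hmem⟩
    -- every step of bs is in C X, by strong induction on index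
    have key : ∀ n : ℕ, ∀ j : Fin bs.length, j.1 = n → bs.get j ∈ C X := by
      intro n
      induction n using Nat.strong_induction_on with
      | _ n ih =>
        intro j hj
        rcases hded j with h | h | ⟨l, hlne, hrule, hprem⟩
        · exact h_incl X h
        · exact hax _ h
        · rcases hrule with ⟨b, hb, heq⟩ | ⟨xs, y, hxne, hnd, hy, heq⟩
          · exfalso
            have hlen : (l ++ [bs.get j]).length = 1 := by rw [heq]; simp
            simp only [List.length_append, List.length_singleton] at hlen
            exact hlne (List.length_eq_zero_iff.mp (by omega))
          · have hl : xs = l ∧ y = bs.get j := by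
              have := List.append_inj' heq.symm rfl
              simpa using this
            obtain ⟨rfl, hy2⟩ := hl
            -- all premises are in C X
            have hsub : {x | x ∈ xs} ⊆ C X := by
              intro x hx
              rcases hprem x hx with h | h | h
              · exact h_incl X h
              · exact hax _ h
              · rcases List.mem_iff_getElem.mp h with ⟨i, hi, hix⟩
                have hi2 : i < j.1 := lt_of_lt_of_le hi (by simp)
                have hi3 : i < bs.length := lt_trans hi2 j.2
                have : bs.get ⟨i, hi3⟩ = x := by
                  rw [← hix]; simp [List.getElem_take]
                rw [← this]
                exact ih i (hj ▸ hi2) ⟨i, hi3⟩ rfl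
            have : C {x | x ∈ xs} ⊆ C X := by
              rw [← h_idem X]; exact h_mono _ _ hsub
            rw [← hy2]
            exact this hy.1
    rcases List.mem_iff_getElem.mp hmem with ⟨i, hi, hia⟩
    rw [← hia]
    exact key i ⟨i, hi⟩ rfl
  · -- C X ⊆ genOp
    intro a ha
    by_cases haX : a ∈ X
    · exact ⟨[a], fun j => Or.inl (by simp [haX]), by simp⟩
    by_cases haE : a ∈ C ∅
    · refine ⟨[a], fun j => Or.inr (Or.inl ?_), by simp⟩
      have : [a].get j = a := by simp
      rw [this]
      exact Or.inl ⟨a, haE, rfl⟩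
    -- a ∈ C A for some finite A ⊆ X
    rw [h_fin X] at ha
    simp only [Set.mem_iUnion] at ha
    obtain ⟨A, ⟨hAX, hAf⟩, haA⟩ := ha
    set xs := hAf.toFinset.toList with hxs
    have hmemxs : ∀ x, x ∈ xs ↔ x ∈ A := by
      intro x; rw [hxs]; simp
    have hAset : {x | x ∈ xs} = A := Set.ext hmemxs
    have hxne : xs ≠ [] := by
      intro h
      have : A = ∅ := by
        ext x; simp [← hmemxs, h]
      exact haE (h_mono _ _ (by simp [this]) haA)
    refine ⟨xs ++ [a], ?_, by simp⟩
    intro j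
    by_cases hj : j.1 < xs.length
    · left
      have : (xs ++ [a]).get j = xs.get ⟨j.1, hj⟩ := by
        simp [List.getElem_append_left hj]
      rw [this]
      exact hAX ((hmemxs _).mp (List.get_mem xs ⟨j.1, hj⟩))
    · have hj2 : j.1 = xs.length := by
        have := j.2; simp at this; omega
      have hget : (xs ++ [a]).get j = a := by
        have := List.getElem_concat_length (l := xs) (a := a) (i := j.1) hj2 (by simp [hj2])
        simpa using this
      right; right
      refine ⟨xs, hxne, ?_, ?_⟩
      · rw [hget]
        right
        refine ⟨xs, a, hxne, Finset.nodup_toList _, ?_, rfl⟩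
        rw [hAset]
        refine ⟨haA, ?_⟩
        rintro (h | h)
        · exact haX (hAX h)
        · exact haE h
      · intro b hb
        exact Or.inl (hAX ((hmemxs b).mp hb))
end

section
/- Let L be a nonempty set. A set map C : P(L) → P(L) is a finite consequence operator if and only if there exists a general logic-system RI on L whose generated operator equals C (i.e., if and only if C is defined by a general logic-system). -/
section
variable {L : Type*} {RI : Set (List L)} {X Y : Set L}

theorem IsDeduction.mono (h : X ⊆ Y) {bs : List L} (hd : IsDeduction RI X bs) :
    IsDeduction RI Y bs := by
  intro j
  rcases hd j with h1 | h1 | ⟨l, hl, hr, hp⟩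
  · exact Or.inl (h h1)
  · exact Or.inr (Or.inl h1)
  · exact Or.inr (Or.inr ⟨l, hl, hr, fun b hb => by
      rcases hp b hb with h2 | h2 | h2
      · exact Or.inl (h h2)
      · exact Or.inr (Or.inl h2)
      · exact Or.inr (Or.inr h2)⟩)

theorem genOp.mono (h : X ⊆ Y) : genOp RI X ⊆ genOp RI Y := by
  rintro a ⟨bs, hd, ha⟩
  exact ⟨bs, hd.mono h, ha⟩

theorem fin_singleton_eq {a : L} (j : Fin [a].length) : j = ⟨0, by simp⟩ := by
  have h := j.2
  simp only [List.length_singleton] at h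
  exact Fin.ext (show j.1 = 0 by omega)

theorem genOp.ext : X ⊆ genOp RI X := by
  intro x hx
  refine ⟨[x], ?_, by simp⟩
  intro j
  have : j = ⟨0, by simp⟩ := fin_singleton_eq j
  subst this
  exact Or.inl hx

theorem IsDeduction.append {bs cs : List L} (hb : IsDeduction RI X bs)
    (hc : IsDeduction RI X cs) : IsDeduction RI X (bs ++ cs) := by
  intro j
  have hjl : j.1 < bs.length + cs.length := by
    have := j.2; simpa using this
  by_cases h : j.1 < bs.length
  · have hget : (bs ++ cs).get j = bs.get ⟨j.1, h⟩ := by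
      simp [List.get_eq_getElem, List.getElem_append, h]
    rw [hget]
    rcases hb ⟨j.1, h⟩ with h1 | h1 | ⟨l, hl, hr, hp⟩
    · exact Or.inl h1
    · exact Or.inr (Or.inl h1)
    · refine Or.inr (Or.inr ⟨l, hl, hr, fun b hbmem => ?_⟩)
      rcases hp b hbmem with h2 | h2 | h2
      · exact Or.inl h2
      · exact Or.inr (Or.inl h2)
      · refine Or.inr (Or.inr ?_)
        rw [List.take_append_of_le_length (by omega)]
        exact h2
  · have hk : j.1 - bs.length < cs.length := by omega
    have hget : (bs ++ cs).get j = cs.get ⟨j.1 - bs.length, hk⟩ := by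
      simp [List.get_eq_getElem, List.getElem_append, h]
    rw [hget]
    rcases hc ⟨j.1 - bs.length, hk⟩ with h1 | h1 | ⟨l, hl, hr, hp⟩
    · exact Or.inl h1
    · exact Or.inr (Or.inl h1)
    · refine Or.inr (Or.inr ⟨l, hl, hr, fun b hbmem => ?_⟩)
      rcases hp b hbmem with h2 | h2 | h2
      · exact Or.inl h2
      · exact Or.inr (Or.inl h2)
      · refine Or.inr (Or.inr ?_)
        have : (bs ++ cs).take j.1 = bs ++ cs.take (j.1 - bs.length) := by
          rw [List.take_append]
          congr 1
          · rw [List.take_of_length_le (by omega)]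
        rw [this]
        exact List.mem_append_right _ h2

theorem exists_deduction_of_forall {l : List L}
    (h : ∀ b ∈ l, b ∈ genOp RI X) :
    ∃ D : List L, IsDeduction RI X D ∧ ∀ b ∈ l, b ∈ D := by
  induction l with
  | nil => exact ⟨[], fun j => absurd j.2 (by simp), by simp⟩
  | cons a t ih =>
    obtain ⟨D, hD, hDm⟩ := ih (fun b hb => h b (List.mem_cons_of_mem _ hb))
    obtain ⟨bs, hbs, hab⟩ := h a List.mem_cons_self
    refine ⟨D ++ bs, hD.append hbs, fun b hb => ?_⟩
    rcases List.mem_cons.mp hb with rfl | hb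
    · exact List.mem_append_right _ hab
    · exact List.mem_append_left _ (hDm b hb)

theorem genOp.idem_subset : genOp RI (genOp RI X) ⊆ genOp RI X := by
  rintro a ⟨bs, hd, ha⟩
  -- every element of bs is in genOp RI X, by strong induction on the index
  have key : ∀ n : ℕ, ∀ h : n < bs.length, bs.get ⟨n, h⟩ ∈ genOp RI X := by
    intro n
    induction n using Nat.strong_induction_on with
    | _ n ih =>
      intro hn
      rcases hd ⟨n, hn⟩ with h1 | h1 | ⟨l, hl, hr, hp⟩
      · exact h1
      · refine ⟨[bs.get ⟨n, hn⟩], fun j => ?_, by simp⟩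
        have : j = ⟨0, by simp⟩ := fin_singleton_eq j
        subst this
        exact Or.inr (Or.inl h1)
      · have hlmem : ∀ b ∈ l, b ∈ genOp RI X := by
          intro b hb
          rcases hp b hb with h2 | h2 | h2
          · exact h2
          · refine ⟨[b], fun j => ?_, by simp⟩
            have : j = ⟨0, by simp⟩ := fin_singleton_eq j
            subst this
            exact Or.inr (Or.inl h2)
          · rw [List.mem_take_iff_getElem] at h2
            obtain ⟨i, hi, rfl⟩ := h2
            have hi' : i < n := (lt_min_iff.mp hi).1
            exact ih i hi' (hi'.trans hn)
        obtain ⟨D, hD, hDm⟩ := exists_deduction_of_forall hlmem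
        refine ⟨D ++ [bs.get ⟨n, hn⟩], ?_, by simp⟩
        intro j
        by_cases hj : j.1 < D.length
        · have hget : (D ++ [bs.get ⟨n, hn⟩]).get j = D.get ⟨j.1, hj⟩ := by
            simp [List.get_eq_getElem, List.getElem_append, hj]
          rw [hget]
          rcases hD ⟨j.1, hj⟩ with h1 | h1 | ⟨l', hl', hr', hp'⟩
          · exact Or.inl h1
          · exact Or.inr (Or.inl h1)
          · refine Or.inr (Or.inr ⟨l', hl', hr', fun b hbmem => ?_⟩)
            rcases hp' b hbmem with h2 | h2 | h2
            · exact Or.inl h2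
            · exact Or.inr (Or.inl h2)
            · refine Or.inr (Or.inr ?_)
              rw [List.take_append_of_le_length (by omega)]
              exact h2
        · have hj2 : j.1 = D.length := by
            have := j.2; simp at this; omega
          have hget : (D ++ [bs.get ⟨n, hn⟩]).get j = bs.get ⟨n, hn⟩ := by
            simp [List.get_eq_getElem, List.getElem_append, hj, hj2]
          rw [hget]
          refine Or.inr (Or.inr ⟨l, hl, hr, fun b hbmem => ?_⟩)
          refine Or.inr (Or.inr ?_)
          have : (D ++ [bs.get ⟨n, hn⟩]).take j.1 = D := by
            rw [hj2, List.take_append_of_le_length le_rfl, List.take_length]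
          rw [this]
          exact hDm b hbmem
  obtain ⟨i, hi, rfl⟩ := List.mem_iff_getElem.mp ha
  exact key i hi

open Classical in
theorem genOp.finitary {a : L} (ha : a ∈ genOp RI X) :
    ∃ A : Set L, A ⊆ X ∧ A.Finite ∧ a ∈ genOp RI A := by
  obtain ⟨bs, hd, habs⟩ := ha
  -- choose witness lists
  let w : Fin bs.length → List L := fun j =>
    if h : ∃ l : List L, l ≠ [] ∧ l ++ [bs.get j] ∈ RI ∧
        ∀ b ∈ l, b ∈ X ∨ [b] ∈ RI ∨ b ∈ bs.take j.1 then h.choose else []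
  let A : Set L := X ∩ {x | x ∈ bs ∨ ∃ j, x ∈ w j}
  have hAX : A ⊆ X := Set.inter_subset_left
  have hAfin : A.Finite := by
    apply Set.Finite.subset
      (Finset.finite_toSet (bs.toFinset ∪ Finset.univ.biUnion fun j => (w j).toFinset))
    rintro x ⟨-, hx | ⟨j, hj⟩⟩
    · simp [hx]
    · simp only [Finset.coe_union, Set.mem_union, Finset.coe_biUnion, Set.mem_iUnion]
      exact Or.inr ⟨j, by simp, by simp [hj]⟩
  refine ⟨A, hAX, hAfin, bs, fun j => ?_, habs⟩
  rcases hd j with h1 | h1 | h1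
  · exact Or.inl ⟨h1, Or.inl (by simpa using List.getElem_mem j.2)⟩
  · exact Or.inr (Or.inl h1)
  · have hw : w j = h1.choose := dif_pos h1
    obtain ⟨hne, hr, hp⟩ := h1.choose_spec
    refine Or.inr (Or.inr ⟨w j, by rw [hw]; exact hne, by rw [hw]; exact hr, fun b hb => ?_⟩)
    rw [hw] at hb
    rcases hp b hb with h2 | h2 | h2
    · exact Or.inl ⟨h2, Or.inr ⟨j, by rw [hw]; exact hb⟩⟩
    · exact Or.inr (Or.inl h2)
    · exact Or.inr (Or.inr h2)

theorem ruleC {C : Set L → Set L} {l : List L} {b : L}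
    (h : l ++ [b] ∈ {bs : List L | ∃ l a, bs = l ++ [a] ∧ a ∈ C {x | x ∈ l}}) :
    b ∈ C {x | x ∈ l} := by
  obtain ⟨l₂, a, heq, hC⟩ := h
  obtain ⟨rfl, hba⟩ := List.append_inj' heq (by simp)
  simp only [List.cons.injEq, and_true] at hba
  exact hba ▸ hC

end

/-- A set map `C : P(L) → P(L)` is a finite consequence operator if and only if
it is defined (generated) by some general logic-system on `L`. -/
theorem stmt6 {L : Type*} [Nonempty L] (C : Set L → Set L) :
    ((∀ X : Set L, X ⊆ C X) ∧
     (∀ X : Set L, C (C X) = C X) ∧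
     (∀ X Y : Set L, X ⊆ Y → C X ⊆ C Y) ∧
     (∀ X : Set L, C X = ⋃ A ∈ {A : Set L | A ⊆ X ∧ A.Finite}, C A)) ↔
    ∃ RI : Set (List L), ∀ X : Set L, genOp RI X = C X := by
  constructor
  · rintro ⟨hext, hidem, hmono, hfin⟩
    refine ⟨{bs : List L | ∃ l a, bs = l ++ [a] ∧ a ∈ C {x | x ∈ l}}, fun X => ?_⟩
    set RI : Set (List L) := {bs : List L | ∃ l a, bs = l ++ [a] ∧ a ∈ C {x | x ∈ l}} with hRIdef
    apply Set.Subset.antisymm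
    · rintro a ⟨bs, hd, habs⟩
      have key : ∀ n : ℕ, ∀ hn : n < bs.length, bs.get ⟨n, hn⟩ ∈ C X := by
        intro n
        induction n using Nat.strong_induction_on with
        | _ n ih =>
          intro hn
          rcases hd ⟨n, hn⟩ with h1 | h1 | ⟨l, hl, hr, hp⟩
          · exact hext X h1
          · have : bs.get ⟨n, hn⟩ ∈ C {x | x ∈ ([] : List L)} := ruleC h1
            exact hmono _ _ (fun x hx => by simp at hx) this
          · have hb : bs.get ⟨n, hn⟩ ∈ C {x | x ∈ l} := ruleC hr
            have hsub : {x | x ∈ l} ⊆ C X := by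
              intro b hb2
              rcases hp b hb2 with h2 | h2 | h2
              · exact hext X h2
              · have : b ∈ C {x | x ∈ ([] : List L)} := ruleC h2
                exact hmono _ _ (fun x hx => by simp at hx) this
              · rw [List.mem_take_iff_getElem] at h2
                obtain ⟨i, hi, rfl⟩ := h2
                have hi' : i < n := (lt_min_iff.mp hi).1
                exact ih i hi' (hi'.trans hn)
            exact hidem X ▸ hmono _ _ hsub hb
      obtain ⟨i, hi, rfl⟩ := List.mem_iff_getElem.mp habs
      exact key i hi
    · intro a haC
      rw [hfin X] at haC
      simp only [Set.mem_iUnion, Set.mem_setOf_eq, exists_prop] at haC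
      obtain ⟨A, ⟨hAX, hAfin⟩, haA⟩ := haC
      set l : List L := hAfin.toFinset.toList with hl
      have hset : {x | x ∈ l} = A := by
        ext x; simp [hl, Set.Finite.mem_toFinset]
      by_cases hne : l = []
      · have hAe : A = ∅ := by rw [← hset, hne]; ext x; simp
        refine ⟨[a], fun j => ?_, by simp⟩
        have : j = ⟨0, by simp⟩ := fin_singleton_eq j
        subst this
        refine Or.inr (Or.inl ?_)
        exact ⟨[], a, rfl, by rw [show {x | x ∈ ([] : List L)} = A by rw [hAe]; ext x; simp]; exact haA⟩
      · refine ⟨l ++ [a], fun j => ?_, by simp⟩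
        have hjl : j.1 < l.length + 1 := by have := j.2; simpa using this
        by_cases hj : j.1 < l.length
        · have hget : (l ++ [a]).get j = l.get ⟨j.1, hj⟩ := by
            simp [List.get_eq_getElem, List.getElem_append, hj]
          rw [hget]
          exact Or.inl (hAX (hset ▸ (by simp : l.get ⟨j.1, hj⟩ ∈ l)))
        · have hget : (l ++ [a]).get j = a := by
            have hj2 : j.1 = l.length := by omega
            simp [List.get_eq_getElem, List.getElem_append, hj, hj2]
          rw [hget]
          exact Or.inr (Or.inr ⟨l, hne, ⟨l, a, rfl, hset ▸ haA⟩,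
            fun b hb => Or.inl (hAX (hset ▸ hb))⟩)
  · rintro ⟨RI, hRI⟩
    refine ⟨fun X => hRI X ▸ genOp.ext, fun X => ?_, fun X Y h => ?_, fun X => ?_⟩
    · rw [← hRI X, ← hRI (genOp RI X)]
      exact Set.Subset.antisymm genOp.idem_subset (genOp.ext)
    · rw [← hRI X, ← hRI Y]
      exact genOp.mono h
    · rw [← hRI X]
      apply Set.Subset.antisymm
      · intro a ha
        obtain ⟨A, hAX, hAfin, haA⟩ := genOp.finitary ha
        simp only [Set.mem_iUnion, Set.mem_setOf_eq, exists_prop]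
        exact ⟨A, ⟨hAX, hAfin⟩, hRI A ▸ haA⟩
      · simp only [Set.iUnion_subset_iff, Set.mem_setOf_eq]
        rintro A ⟨hAX, -⟩
        rw [← hRI A]
        exact genOp.mono hAX
end

section
/- Let L be a nonempty set and let C₁ be a general consequence operator on L (not necessarily finite). Let RI*₁ be the logic-system defined from C₁ by: R¹ = C₁(∅); for each nonempty finite X ⊆ L with |X| = n and enumeration X = {x₁,…,xₙ}, R^{n+1}_X(C₁) = {(x₁,…,xₙ,y) : y ∈ C₁(X) − (X ∪ R¹)} if C₁(X) ≠ X ∪ R¹ and ∅ otherwise, with R^{n+1}_F(C₁) the union of these over all finite X of cardinality n; and RI*₁ = {R¹} ∪ {R^{n+1}_F(C₁) : n ≥ 1}. Then for every X ⊆ L and every RI*₁-deduction b₁,…,bₙ from X, each b_i ∈ C₁(X). Consequently, the operator C*₁ generated by RI*₁ satisfies C*₁(X) ⊆ C₁(X) for all X ⊆ L. -/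
section

variable {L : Type*}

theorem singleton_mem_RIstar_iff {C : Set L → Set L} {a : L} : [a] ∈ RIstar C ↔ a ∈ C ∅ := by
  constructor
  · rintro (⟨b, hb, hab⟩ | ⟨xs, y, hxs, -, -, hxy⟩)
    · exact (List.singleton_inj.1 hab) ▸ hb
    · exact absurd (by simpa using congrArg List.length hxy) hxs
  · exact fun ha => Or.inl ⟨a, ha, rfl⟩

theorem mem_of_append_singleton_mem_RIstar {C : Set L → Set L} {l : List L} {y : L}
    (hl : l ≠ []) (h : l ++ [y] ∈ RIstar C) : y ∈ C {x | x ∈ l} := by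
  rcases h with ⟨a, -, ha⟩ | ⟨xs, z, -, -, hz, hxz⟩
  · exact absurd (by simpa using congrArg List.length ha) hl
  · obtain ⟨rfl, hyz⟩ := List.append_inj' hxz rfl
    exact (List.singleton_inj.1 hyz) ▸ hz.1

theorem IsDeduction.mem_of_closed {RI : Set (List L)} {X S : Set L} {bs : List L}
    (hbs : IsDeduction RI X bs) (hX : X ⊆ S) (hax : ∀ a, [a] ∈ RI → a ∈ S)
    (hrule : ∀ l y, l ≠ [] → l ++ [y] ∈ RI → (∀ b ∈ l, b ∈ S) → y ∈ S) :
    ∀ b ∈ bs, b ∈ S := by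
  have step (j : Fin bs.length) (hprev : ∀ b ∈ bs.take j, b ∈ S) : bs.get j ∈ S := by
    rcases hbs j with h | h | ⟨l, hl, hrl, hpre⟩
    · exact hX h
    · exact hax _ h
    · refine hrule l _ hl hrl fun b hb => ?_
      rcases hpre b hb with h | h | h
      exacts [hX h, hax b h, hprev b h]
  have prefix_mem (n : ℕ) : ∀ b ∈ bs.take n, b ∈ S := by
    induction n with
    | zero => simp
    | succ n ih =>
      intro b hb
      rcases List.mem_append.1 (List.take_add_one .. ▸ hb) with h | h
      · exact ih b h
      · obtain ⟨hn, rfl⟩ : ∃ hn : n < bs.length, bs[n] = b := by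
          simpa [List.getElem?_eq_some_iff] using h
        exact step ⟨n, hn⟩ ih
  exact fun b hb => prefix_mem bs.length b (by simpa using hb)

theorem mem_of_isDeduction_RIstar {C : Set L → Set L} (h_incl : ∀ X : Set L, X ⊆ C X)
    (h_idem : ∀ X : Set L, C (C X) = C X) (h_mono : ∀ X Y : Set L, X ⊆ Y → C X ⊆ C Y)
    {X : Set L} {bs : List L} (hbs : IsDeduction (RIstar C) X bs) : ∀ b ∈ bs, b ∈ C X := by
  refine hbs.mem_of_closed (h_incl X)
    (fun a ha => h_mono ∅ X (Set.empty_subset X) (singleton_mem_RIstar_iff.1 ha))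
    (fun l y hl hy hlX => ?_)
  rw [← h_idem X]
  exact h_mono _ _ hlX (mem_of_append_singleton_mem_RIstar hl hy)

end

theorem stmt7_general {L : Type*} (C₁ : Set L → Set L)
    (h_incl : ∀ X : Set L, X ⊆ C₁ X)
    (h_idem : ∀ X : Set L, C₁ (C₁ X) = C₁ X)
    (h_mono : ∀ X Y : Set L, X ⊆ Y → C₁ X ⊆ C₁ Y) :
    (∀ (X : Set L) (bs : List L), IsDeduction (RIstar C₁) X bs → ∀ b ∈ bs, b ∈ C₁ X) ∧
    (∀ X : Set L, genOp (RIstar C₁) X ⊆ C₁ X) :=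
  ⟨fun _ _ hbs => mem_of_isDeduction_RIstar h_incl h_idem h_mono hbs,
    fun _ _ ⟨_, hbs, hb⟩ => mem_of_isDeduction_RIstar h_incl h_idem h_mono hbs _ hb⟩

/-- If `C₁` is a general (not necessarily finite) consequence operator and
`RI*₁` is the logic-system defined from `C₁`, then every step of every
`RI*₁`-deduction from `X` lies in `C₁(X)`; consequently the generated operator
`C*₁` satisfies `C*₁(X) ⊆ C₁(X)` for all `X`. -/
theorem stmt7 {L : Type*} [Nonempty L] (C₁ : Set L → Set L)
    (h_incl : ∀ X : Set L, X ⊆ C₁ X)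
    (h_idem : ∀ X : Set L, C₁ (C₁ X) = C₁ X)
    (h_mono : ∀ X Y : Set L, X ⊆ Y → C₁ X ⊆ C₁ Y) :
    (∀ (X : Set L) (bs : List L), IsDeduction (RIstar C₁) X bs → ∀ b ∈ bs, b ∈ C₁ X) ∧
    (∀ X : Set L, genOp (RIstar C₁) X ⊆ C₁ X) :=
  stmt7_general C₁ h_incl h_idem h_mono
end
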